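/- Let Z ∈ ℝ[[u,v]] be of order at least 2, written Z = (1/2)(a₂₀u² + 2a₁₁uv + a₀₂v²) + Z̃ with Z̃ of order at least 3. Then for k + l = m ≥ 3, the normalized degree-m coefficient of (Z_u)² equals 2k a₂₀ Z(k,l) + 2l a₁₁ Z(k+1,l−1) plus a polynomial depending only on the coefficients Z(a,b) with a+b ≤ m−1. -/

import Mathlib

/-!
Write `Q` for the quadratic part and `D = Z - Z'`, which vanishes to order `m` by hypothesis. Then
`Z_u² - Z'_u² = D_u ((Z - Q)_u + (Z' - Q)_u) + 2 Q_u D_u`.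
The first product has order at least `(m - 1) + 2`, so it has no coefficient in degree `m`.
Since `Q_u = a₂₀ u + a₁₁ v`, the Euler-type identities `(u D_u)(k,l) = k D(k,l)` and
`(v D_u)(k,l) = l D(k+1,l-1)` show that the degree-`m` part of `2 Q_u D_u` is the difference of
the two leading terms.
-/

/-- The normalized (k,l)-coefficient of a formal power series `P ∈ ℝ[[u,v]]`:
`P(k,l) = k! l! ×` (coefficient of `u^k v^l`), where `u, v` are the variables `X 0, X 1`. -/
noncomputable def ncoeff (P : MvPowerSeries (Fin 2) ℝ) (k l : ℕ) : ℝ :=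
  (Nat.factorial k : ℝ) * (Nat.factorial l : ℝ) *
    MvPowerSeries.coeff (Finsupp.single 0 k + Finsupp.single 1 l) P

/-- `P` has order at least `m`: all normalized coefficients of total degree `< m` vanish. -/
def OrdGE (m : ℕ) (P : MvPowerSeries (Fin 2) ℝ) : Prop :=
  ∀ k l : ℕ, k + l < m → ncoeff P k l = 0

/-- The formal partial derivative with respect to the first variable `u`. -/
noncomputable def pderivU (P : MvPowerSeries (Fin 2) ℝ) : MvPowerSeries (Fin 2) ℝ :=
  fun d => ((d 0 : ℕ) + 1 : ℝ) * MvPowerSeries.coeff (d + Finsupp.single 0 1) P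

/-- The quadratic form `(1/2)(a₂₀u² + 2a₁₁uv + a₀₂v²)` as a power series. -/
noncomputable def quadPart (a20 a11 a02 : ℝ) : MvPowerSeries (Fin 2) ℝ :=
  (a20 / 2) • (MvPowerSeries.X 0 ^ 2) + a11 • (MvPowerSeries.X 0 * MvPowerSeries.X 1)
    + (a02 / 2) • (MvPowerSeries.X 1 ^ 2)

open MvPowerSeries Finsupp

namespace MvPowerSeries

variable {σ R : Type*} [CommSemiring R]

theorem le_order_pderiv {f : MvPowerSeries σ R} {i : σ} {n : ℕ}
    (h : ((n + 1 : ℕ) : ℕ∞) ≤ f.order) :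
    (n : ℕ∞) ≤ (pderiv R i f).order := by
  refine nat_le_order fun d hd => ?_
  rw [coeff_pderiv, coeff_of_lt_order, zero_mul]
  refine lt_of_lt_of_le ?_ h
  rw [map_add, degree_single]
  exact_mod_cast Nat.add_lt_add_right hd 1

theorem coeff_X_mul_pderiv_self (f : MvPowerSeries σ R) (i : σ) (d : σ →₀ ℕ) :
    coeff d (X i * pderiv R i f) = d i * coeff d f := by
  classical
  rw [X, coeff_monomial_mul, one_mul]
  split_ifs with h
  · rw [coeff_pderiv, tsub_add_cancel_of_le h, mul_comm]
    congr
    have := Finsupp.single_le_iff.mp h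
    simp only [coe_tsub, Pi.sub_apply, single_eq_same]
    rw [← Nat.cast_add_one, Nat.sub_add_cancel this]
  · rw [Finsupp.single_le_iff, not_le, Nat.lt_one_iff] at h
    simp [h]

end MvPowerSeries

theorem pderivU_eq_pderiv (P : MvPowerSeries (Fin 2) ℝ) : pderivU P = pderiv ℝ 0 P := by
  ext d
  rw [coeff_pderiv, mul_comm]
  rfl

theorem ncoeff_add (P Q : MvPowerSeries (Fin 2) ℝ) (k l : ℕ) :
    ncoeff (P + Q) k l = ncoeff P k l + ncoeff Q k l := by
  simp only [ncoeff, map_add, mul_add]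

theorem ncoeff_sub (P Q : MvPowerSeries (Fin 2) ℝ) (k l : ℕ) :
    ncoeff (P - Q) k l = ncoeff P k l - ncoeff Q k l := by
  simp only [ncoeff, map_sub, mul_sub]

theorem ncoeff_smul (c : ℝ) (P : MvPowerSeries (Fin 2) ℝ) (k l : ℕ) :
    ncoeff (c • P) k l = c * ncoeff P k l := by
  simp only [ncoeff, map_smul, smul_eq_mul]
  ring

theorem degree_single_zero_add_single_one (k l : ℕ) :
    (single (0 : Fin 2) k + single 1 l).degree = k + l := by
  simp [map_add, degree_single]

theorem single_zero_add_single_one_apply_zero (k l : ℕ) :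
    (single (0 : Fin 2) k + single 1 l : Fin 2 →₀ ℕ) 0 = k := by
  simp

theorem le_order_of_ordGE {m : ℕ} {P : MvPowerSeries (Fin 2) ℝ} (h : OrdGE m P) :
    (m : ℕ∞) ≤ P.order := by
  refine nat_le_order fun d hd => ?_
  have hd' : d = single 0 (d 0) + single 1 (d 1) := by
    ext i; fin_cases i <;> simp
  have hn := h (d 0) (d 1) (by rwa [hd', degree_single_zero_add_single_one] at hd)
  rw [ncoeff, ← hd'] at hn
  simpa [Nat.factorial_ne_zero] using hn

theorem ncoeff_eq_zero_of_lt_order {P : MvPowerSeries (Fin 2) ℝ} {k l : ℕ}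
    (h : ((k + l : ℕ) : ℕ∞) < P.order) : ncoeff P k l = 0 := by
  rw [ncoeff, coeff_of_lt_order (by rwa [degree_single_zero_add_single_one]), mul_zero]

theorem pderiv_quadPart (a20 a11 a02 : ℝ) :
    pderiv ℝ 0 (quadPart a20 a11 a02) = a20 • X 0 + a11 • X 1 := by
  simp [quadPart, Derivation.leibniz, two_mul, smul_add, ← add_smul]

theorem ncoeff_X_zero_mul_pderiv (P : MvPowerSeries (Fin 2) ℝ) (k l : ℕ) :
    ncoeff (X 0 * pderiv ℝ 0 P) k l = k * ncoeff P k l := by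
  rw [ncoeff, coeff_X_mul_pderiv_self, ncoeff, single_zero_add_single_one_apply_zero]
  ring

theorem ncoeff_X_one_mul_pderiv (P : MvPowerSeries (Fin 2) ℝ) (k l : ℕ) :
    ncoeff (X 1 * pderiv ℝ 0 P) k l = l * ncoeff P (k + 1) (l - 1) := by
  rcases l with _ | l
  · rw [ncoeff, X, coeff_monomial_mul, if_neg] <;> simp [Finsupp.single_le_iff]
  · have hv : single (0 : Fin 2) k + single 1 (l + 1) = single 1 1 + (single 0 k + single 1 l) := by
      ext i; fin_cases i <;> simp [add_comm]
    have hu : single (0 : Fin 2) k + single 1 l + single 0 1 = single 0 (k + 1) + single 1 l := by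
      rw [add_right_comm, ← single_add]
    rw [ncoeff, ncoeff, hv, X, coeff_add_monomial_mul, coeff_pderiv, hu, Nat.add_sub_cancel,
      single_zero_add_single_one_apply_zero]
    push_cast [Nat.factorial_succ]
    ring

theorem ncoeff_linear_mul_pderiv (a b : ℝ) (P : MvPowerSeries (Fin 2) ℝ) (k l : ℕ) :
    ncoeff ((a • X 0 + b • X 1) * pderiv ℝ 0 P) k l =
      k * a * ncoeff P k l + l * b * ncoeff P (k + 1) (l - 1) := by
  rw [add_mul, smul_mul_assoc, smul_mul_assoc, ncoeff_add, ncoeff_smul, ncoeff_smul,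
    ncoeff_X_zero_mul_pderiv, ncoeff_X_one_mul_pderiv]
  ring

theorem zu_sq_leading_term_general (a20 a11 a02 : ℝ) (Z Z' : MvPowerSeries (Fin 2) ℝ)
    (hZ : OrdGE 3 (Z - quadPart a20 a11 a02)) (hZ' : OrdGE 3 (Z' - quadPart a20 a11 a02))
    (m : ℕ)
    (hagree : ∀ a b : ℕ, a + b ≤ m - 1 → ncoeff Z a b = ncoeff Z' a b) :
    ∀ k l : ℕ, k + l = m →
      ncoeff (pderivU Z ^ 2) k l
          - (2 * (k : ℝ) * a20 * ncoeff Z k l + 2 * (l : ℝ) * a11 * ncoeff Z (k + 1) (l - 1)) =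
        ncoeff (pderivU Z' ^ 2) k l
          - (2 * (k : ℝ) * a20 * ncoeff Z' k l
              + 2 * (l : ℝ) * a11 * ncoeff Z' (k + 1) (l - 1)) := by
  intro k l hkl
  set Q := quadPart a20 a11 a02
  set D := pderiv ℝ 0 (Z - Z')
  set S := pderiv ℝ 0 (Z - Q) + pderiv ℝ 0 (Z' - Q)
  have hsplit : pderivU Z ^ 2 - pderivU Z' ^ 2 =
      D * S + 2 * ((a20 • X 0 + a11 • X 1) * D) := by
    simp only [D, S, Q, pderivU_eq_pderiv, map_sub, pderiv_quadPart, smul_eq_C_mul]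
    ring
  have hZZ' : OrdGE (m - 1 + 1) (Z - Z') := fun a b h => by
    rw [ncoeff_sub, hagree a b (by omega), sub_self]
  have hD : ((m - 1 : ℕ) : ℕ∞) ≤ D.order := le_order_pderiv (le_order_of_ordGE hZZ')
  have hS : ((2 : ℕ) : ℕ∞) ≤ S.order :=
    le_trans (le_min (le_order_pderiv (le_order_of_ordGE hZ))
      (le_order_pderiv (le_order_of_ordGE hZ'))) min_order_le_add
  have hDS : ncoeff (D * S) k l = 0 := by
    refine ncoeff_eq_zero_of_lt_order (lt_of_lt_of_le ?_ (le_order_mul.trans' (add_le_add hD hS)))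
    norm_cast
    omega
  have hcoeff := congrArg (ncoeff · k l) hsplit
  rw [ncoeff_sub, ncoeff_add, hDS, two_mul, ncoeff_add, ncoeff_linear_mul_pderiv, ncoeff_sub,
    ncoeff_sub] at hcoeff
  linear_combination hcoeff

/-- Leading-term computation for `z_u²`: if `Z = (1/2)(a₂₀u² + 2a₁₁uv + a₀₂v²) + Z̃`
with `Z̃ ∈ 𝒪₃` (so `Z ∈ 𝒪₂`), then for `k + l = m ≥ 3` the quantity
`(Z_u²)(k,l) − (2k a₂₀ Z(k,l) + 2l a₁₁ Z(k+1,l−1))` depends only on the coefficients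
of `Z` of total degree at most `m − 1`: it is unchanged if `Z` is replaced by any
`Z' = (1/2)(a₂₀u² + 2a₁₁uv + a₀₂v²) + Z̃'`, `Z̃' ∈ 𝒪₃`, agreeing with `Z` in all
coefficients of degree `≤ m − 1`. -/
theorem zu_sq_leading_term (a20 a11 a02 : ℝ) (Z Z' : MvPowerSeries (Fin 2) ℝ)
    (hZord : OrdGE 2 Z) (hZord' : OrdGE 2 Z')
    (hZ : OrdGE 3 (Z - quadPart a20 a11 a02)) (hZ' : OrdGE 3 (Z' - quadPart a20 a11 a02))
    (m : ℕ) (hm : 3 ≤ m)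
    (hagree : ∀ a b : ℕ, a + b ≤ m - 1 → ncoeff Z a b = ncoeff Z' a b) :
    ∀ k l : ℕ, k + l = m →
      ncoeff (pderivU Z ^ 2) k l
          - (2 * (k : ℝ) * a20 * ncoeff Z k l + 2 * (l : ℝ) * a11 * ncoeff Z (k + 1) (l - 1)) =
        ncoeff (pderivU Z' ^ 2) k l
          - (2 * (k : ℝ) * a20 * ncoeff Z' k l
              + 2 * (l : ℝ) * a11 * ncoeff Z' (k + 1) (l - 1)) :=
  zu_sq_leading_term_general a20 a11 a02 Z Z' hZ hZ' m hagree
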